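/- arXiv:2212.01095 — 10 statements merged into one kernel-verified Lean document; each statement's English description precedes it below -/
import Mathlib

section
/- Let f : ℕ → ℚ be a function with f(n) ≠ 0 for all n ≥ 1, set f(0) = 0, and let z be a rational number. Define sequences p, q by the continued fraction recurrences p(0) = 0, q(0) = 1, p(1) = z, q(1) = f(1) + z·f(0), and for n ≥ 2: p(n) = (f(n) + z·f(n-1))·p(n-1) − z·f(n-1)²·p(n-2), q(n) = (f(n) + z·f(n-1))·q(n-1) − z·f(n-1)²·q(n-2). Then for all N ≥ 1, p(N)/q(N) = ∑_{n=1}^{N} zⁿ/f(n). -/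
theorem euler_cf_partial_sums
    (f : ℕ → ℚ) (hf : ∀ n, 1 ≤ n → f n ≠ 0) (hf0 : f 0 = 0) (z : ℚ)
    (p q : ℕ → ℚ)
    (hp0 : p 0 = 0) (hq0 : q 0 = 1)
    (hp1 : p 1 = z) (hq1 : q 1 = f 1 + z * f 0)
    (hp : ∀ n, 2 ≤ n → p n = (f n + z * f (n - 1)) * p (n - 1) - z * (f (n - 1))^2 * p (n - 2))
    (hq : ∀ n, 2 ≤ n → q n = (f n + z * f (n - 1)) * q (n - 1) - z * (f (n - 1))^2 * q (n - 2)) :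
    ∀ N, 1 ≤ N → p N / q N = ∑ n ∈ Finset.Icc 1 N, z ^ n / f n := by
  set Q : ℕ → ℚ := fun n => ∏ k ∈ Finset.Icc 1 n, f k with hQ
  set S : ℕ → ℚ := fun n => ∑ k ∈ Finset.Icc 1 n, z ^ k / f k with hS
  have hQsucc : ∀ n, Q (n + 1) = Q n * f (n + 1) := by
    intro n
    simp [hQ, Finset.prod_Icc_succ_top (Nat.le_add_left 1 n)]
  have hSsucc : ∀ n, S (n + 1) = S n + z ^ (n + 1) / f (n + 1) := by
    intro n
    simp [hS, Finset.sum_Icc_succ_top (Nat.le_add_left 1 n)]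
  have key : ∀ n, q n = Q n ∧ p n = Q n * S n := by
    intro n
    induction n using Nat.strong_induction_on with
    | _ n ih =>
      match n with
      | 0 => simp [hQ, hS, hp0, hq0]
      | 1 =>
        have h1 : f 1 ≠ 0 := hf 1 le_rfl
        constructor
        · simp [hq1, hf0, hQ]
        · simp [hp1, hQ, hS]
          field_simp
      | (m + 2) =>
        have ih1 := ih (m + 1) (by omega)
        have ih0 := ih m (by omega)
        have hg : f (m + 1) ≠ 0 := hf (m + 1) (by omega)
        have hfm2 : f (m + 2) ≠ 0 := hf (m + 2) (by omega)
        have e1 : (m + 2 : ℕ) - 1 = m + 1 := rfl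
        have e2 : (m + 2 : ℕ) - 2 = m := rfl
        have hqrec := hq (m + 2) (by omega)
        have hprec := hp (m + 2) (by omega)
        rw [e1, e2, ih1.1, ih0.1] at hqrec
        rw [e1, e2, ih1.2, ih0.2] at hprec
        rw [hQsucc m] at hqrec hprec
        constructor
        · rw [hqrec, hQsucc (m + 1), hQsucc m]
          ring
        · rw [hprec, hQsucc (m + 1), hQsucc m, hSsucc (m + 1), hSsucc m]
          field_simp
          ring
  intro N hN
  have hQne : Q N ≠ 0 := by
    apply Finset.prod_ne_zero_iff.mpr
    intro k hk
    exact hf k (Finset.mem_Icc.mp hk).1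
  rw [(key N).1, (key N).2, mul_div_cancel_left₀ _ hQne]
end

section
/- Let k ≥ 2 be an integer and P ∈ ℚ[x] a nonzero polynomial such that P(x) divides xᵏP(x+1) + (x−1)ᵏP(x−1) in ℚ[x]. Then P(1) ≠ 0. -/
open Polynomial

theorem eval_one_ne_zero_of_dvd
    (k : ℕ) (hk : 2 ≤ k) (P : ℚ[X]) (hP : P ≠ 0)
    (hdvd : P ∣ X ^ k * P.comp (X + 1) + (X - 1) ^ k * P.comp (X - 1)) :
    P.eval 1 ≠ 0 := by
  intro h1
  obtain ⟨Q, hQ⟩ := hdvd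
  have key : ∀ x : ℚ, x ^ k * P.eval (x + 1) + (x - 1) ^ k * P.eval (x - 1)
      = P.eval x * Q.eval x := by
    intro x
    have := congrArg (Polynomial.eval x) hQ
    simpa [eval_comp] using this
  have hk0 : k ≠ 0 := by omega
  have main : ∀ n : ℕ, P.eval ((n : ℚ) + 1) = 0 := by
    intro n
    induction n using Nat.strong_induction_on with
    | _ n ih =>
      match n, ih with
      | 0, _ => simpa using h1
      | (m+1), ih =>
        have h1' : P.eval ((m : ℚ) + 1) = 0 := ih m (by omega)
        have h2 : ((m : ℚ) + 1) ^ k * P.eval ((m : ℚ) + 1 + 1)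
            + ((m : ℚ) + 1 - 1) ^ k * P.eval ((m : ℚ) + 1 - 1) = 0 := by
          rw [key ((m : ℚ) + 1), h1', zero_mul]
        have hterm : ((m : ℚ) + 1 - 1) ^ k * P.eval ((m : ℚ) + 1 - 1) = 0 := by
          simp only [add_sub_cancel_right]
          rcases Nat.eq_zero_or_pos m with hm | hm
          · subst hm; simp [zero_pow hk0]
          · have : P.eval ((m - 1 : ℕ) + 1 : ℚ) = 0 := ih (m - 1) (by omega)
            have hcast : ((m - 1 : ℕ) : ℚ) + 1 = (m : ℚ) := by
              have h : (m - 1 + 1 : ℕ) = m := by omega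
              exact_mod_cast congrArg (Nat.cast : ℕ → ℚ) h
            rw [hcast] at this
            rw [this, mul_zero]
        rw [hterm, add_zero] at h2
        have hne : ((m : ℚ) + 1) ^ k ≠ 0 := by positivity
        have := (mul_eq_zero.mp h2).resolve_left hne
        convert this using 2
        push_cast
        ring
  apply hP
  apply Polynomial.eq_zero_of_infinite_isRoot
  apply Set.infinite_of_injective_forall_mem
    (f := fun n : ℕ => (n : ℚ) + 1)
  case hi =>
    intro a b hab
    have : (a : ℚ) = b := by
      have := hab
      simp only at this
      linarith
    exact_mod_cast this
  case hf => exact fun n => main n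
end

section
/- Let k ≥ 2 be an integer and P ∈ ℚ[x] a nonzero polynomial such that P(x) divides xᵏP(x+1) + (x−1)ᵏP(x−1) in ℚ[x]. Then P(0) ≠ 0. -/
open Polynomial

theorem eval_zero_ne_zero_of_dvd
    (k : ℕ) (hk : 2 ≤ k) (P : ℚ[X]) (hP : P ≠ 0)
    (hdvd : P ∣ X ^ k * P.comp (X + 1) + (X - 1) ^ k * P.comp (X - 1)) :
    P.eval 0 ≠ 0 := by
  intro h0
  obtain ⟨Q, hQ⟩ := hdvd
  have key : ∀ n : ℕ, P.eval (-(n : ℚ)) = 0 := by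
    intro n
    induction n using Nat.strong_induction_on with
    | _ n ih =>
      match n with
      | 0 => simpa using h0
      | Nat.succ m =>
        have hev := congrArg (eval (-(m : ℚ))) hQ
        simp only [eval_add, eval_mul, eval_pow, eval_X, eval_sub, eval_one,
          eval_comp] at hev
        have hm : P.eval (-(m : ℚ)) = 0 := ih m (Nat.lt_succ_self m)
        rw [hm, zero_mul] at hev
        have hfirst : (-(m : ℚ)) ^ k * P.eval (-(m : ℚ) + 1) = 0 := by
          match m with
          | 0 => simp [zero_pow (by omega : k ≠ 0)]
          | Nat.succ l =>
            have hl : P.eval (-(l : ℚ)) = 0 := ih l (by omega)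
            have : (-(↑(l + 1) : ℚ) + 1) = -(l : ℚ) := by push_cast; ring
            rw [this, hl, mul_zero]
        rw [hfirst, zero_add] at hev
        have hne : (-(m : ℚ) - 1) ^ k ≠ 0 := by
          apply pow_ne_zero
          have : (0 : ℚ) ≤ (m : ℚ) := Nat.cast_nonneg m
          intro h; nlinarith [h]
        have : P.eval (-(m : ℚ) - 1) = 0 := by
          rcases mul_eq_zero.mp hev with h | h
          · exact absurd h hne
          · exact h
        have heq : (-(↑(Nat.succ m) : ℚ)) = -(m : ℚ) - 1 := by push_cast; ring
        rw [heq]; exact this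
  apply hP
  apply Polynomial.eq_zero_of_infinite_isRoot
  apply Set.infinite_of_injective_forall_mem
    (f := fun n : ℕ => -(n : ℚ))
  · intro a b hab
    simpa [neg_inj, Nat.cast_inj] using hab
  · intro n
    exact key n
end

section
/- For every integer k ≥ 2 with k ≡ −1 (mod 3), the polynomial 3x² − 3x + 1 divides xᵏ·(3(x+1)² − 3(x+1) + 1) + (x−1)ᵏ·(3(x−1)² − 3(x−1) + 1) in ℚ[x]. -/
open Polynomial

theorem dvd_case_mod_three (k : ℕ) (hk : 2 ≤ k) (hkm : k % 3 = 2) :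
    (3 * X ^ 2 - 3 * X + 1 : ℚ[X]) ∣
      X ^ k * (3 * (X + 1) ^ 2 - 3 * (X + 1) + 1) +
        (X - 1) ^ k * (3 * (X - 1) ^ 2 - 3 * (X - 1) + 1) := by
  obtain ⟨m, rfl⟩ : ∃ m, k = 3 * m + 2 := ⟨k / 3, by omega⟩
  clear hk hkm
  induction m with
  | zero => exact ⟨2 * X ^ 2 - 2 * X + 7, by ring⟩
  | succ n ih =>
    have h : (X ^ (3 * (n + 1) + 2) : ℚ[X]) * (3 * (X + 1) ^ 2 - 3 * (X + 1) + 1) +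
        (X - 1) ^ (3 * (n + 1) + 2) * (3 * (X - 1) ^ 2 - 3 * (X - 1) + 1)
      = X ^ 3 * (X ^ (3 * n + 2) * (3 * (X + 1) ^ 2 - 3 * (X + 1) + 1) +
          (X - 1) ^ (3 * n + 2) * (3 * (X - 1) ^ 2 - 3 * (X - 1) + 1))
        - (3 * X ^ 2 - 3 * X + 1) *
          ((X - 1) ^ (3 * n + 2) * (3 * (X - 1) ^ 2 - 3 * (X - 1) + 1)) := by
      ring
    rw [h]
    exact dvd_sub (Dvd.dvd.mul_left ih _) (Dvd.dvd.mul_right dvd_rfl _)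
end

section
/- For every integer k ≥ 2 with k ≡ −1 (mod 4), the polynomial 2x² − 2x + 1 divides xᵏ·(2(x+1)² − 2(x+1) + 1) + (x−1)ᵏ·(2(x−1)² − 2(x−1) + 1) in ℚ[x]. -/
open Polynomial

theorem dvd_case_mod_four (k : ℕ) (hk : 2 ≤ k) (hkm : k % 4 = 3) :
    (2 * X ^ 2 - 2 * X + 1 : ℚ[X]) ∣
      X ^ k * (2 * (X + 1) ^ 2 - 2 * (X + 1) + 1) +
        (X - 1) ^ k * (2 * (X - 1) ^ 2 - 2 * (X - 1) + 1) := by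
  obtain ⟨n, rfl⟩ : ∃ n, k = 4 * n + 3 := ⟨k / 4, by omega⟩
  set P : ℚ[X] := 2 * X ^ 2 - 2 * X + 1 with hP
  have h1 : P ∣ (4 : ℚ[X]) * X ^ 4 + 1 := ⟨2 * X ^ 2 + 2 * X + 1, by rw [hP]; ring⟩
  have h2 : P ∣ (4 : ℚ[X]) * (X - 1) ^ 4 + 1 := ⟨2 * X ^ 2 - 6 * X + 5, by rw [hP]; ring⟩
  have h3 : P ∣ (4 : ℚ[X]) * X ^ 4 - 4 * (X - 1) ^ 4 := by
    have h := dvd_sub h1 h2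
    convert h using 1
    ring
  have h4 : ((4 : ℚ[X]) * X ^ 4 - 4 * (X - 1) ^ 4) ∣
      (4 * X ^ 4) ^ (n + 1) - (4 * (X - 1) ^ 4) ^ (n + 1) := sub_dvd_pow_sub_pow _ _ _
  have h5 : P ∣ (4 : ℚ[X]) ^ (n + 1) * ((X ^ 4) ^ (n + 1) - ((X - 1) ^ 4) ^ (n + 1)) := by
    have h := h3.trans h4
    rw [mul_pow, mul_pow] at h
    convert h using 1
    ring
  have key : (C ((1/4 : ℚ) ^ (n + 1))) * (4 : ℚ[X]) ^ (n + 1) = 1 := by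
    have h4' : (4 : ℚ[X]) = C 4 := (map_ofNat C 4).symm
    rw [h4', ← C_pow, ← C_mul, ← mul_pow]
    norm_num
  obtain ⟨q, hq⟩ := h5
  have h7 : P ∣ (X ^ 4) ^ (n + 1) - ((X - 1) ^ 4) ^ (n + 1) := by
    refine ⟨C ((1/4 : ℚ) ^ (n + 1)) * q, ?_⟩
    calc (X ^ 4) ^ (n + 1) - ((X - 1) ^ 4) ^ (n + 1)
        = C ((1/4 : ℚ) ^ (n + 1)) * ((4 : ℚ[X]) ^ (n + 1) *
            ((X ^ 4) ^ (n + 1) - ((X - 1) ^ 4) ^ (n + 1))) := by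
          rw [← mul_assoc, key, one_mul]
      _ = C ((1/4 : ℚ) ^ (n + 1)) * (P * q) := by rw [hq]
      _ = P * (C ((1/4 : ℚ) ^ (n + 1)) * q) := by ring
  have hx : ((X : ℚ[X]) ^ 4) ^ (n + 1) = X ^ (4 * n + 3) * X := by
    rw [← pow_mul, ← pow_succ]
    congr 1
  have hy : ((X - 1 : ℚ[X]) ^ 4) ^ (n + 1) = (X - 1) ^ (4 * n + 3) * (X - 1) := by
    rw [← pow_mul, ← pow_succ]
    congr 1
  rw [hx, hy] at h7
  have hfin : X ^ (4 * n + 3) * (2 * (X + 1) ^ 2 - 2 * (X + 1) + 1) +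
      (X - 1) ^ (4 * n + 3) * (2 * (X - 1) ^ 2 - 2 * (X - 1) + 1) =
      P * (X ^ (4 * n + 3) + (X - 1) ^ (4 * n + 3)) +
        4 * (X ^ (4 * n + 3) * X - (X - 1) ^ (4 * n + 3) * (X - 1)) := by
    rw [hP]
    ring
  rw [hfin]
  exact dvd_add (Dvd.intro _ rfl) (h7.mul_left 4)
end

section
/- For every integer k ≥ 2 with k ≡ −1 (mod 6), the polynomial x² − x + 1 divides xᵏ·((x+1)² − (x+1) + 1) + (x−1)ᵏ·((x−1)² − (x−1) + 1) in ℚ[x]. -/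
open Polynomial

lemma aux_dvd (m : ℕ) :
    (X ^ 2 - X + 1 : ℚ[X]) ∣
      X ^ (6*m+5) * ((X + 1) ^ 2 - (X + 1) + 1) +
        (X - 1) ^ (6*m+5) * ((X - 1) ^ 2 - (X - 1) + 1) := by
  induction m with
  | zero =>
      refine ⟨2*X^5 - 5*X^4 + 22*X^3 - 28*X^2 + 15*X - 3, ?_⟩
      ring
  | succ n ih =>
      have key : (X ^ 2 - X + 1 : ℚ[X]) ∣ (X - 1)^6 - X^6 :=
        ⟨-6*X^3 + 9*X^2 - 5*X + 1, by ring⟩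
      have e : (X : ℚ[X]) ^ (6*(n+1)+5) * ((X + 1) ^ 2 - (X + 1) + 1) +
          (X - 1) ^ (6*(n+1)+5) * ((X - 1) ^ 2 - (X - 1) + 1) =
          X^6 * (X ^ (6*n+5) * ((X + 1) ^ 2 - (X + 1) + 1) +
            (X - 1) ^ (6*n+5) * ((X - 1) ^ 2 - (X - 1) + 1)) +
          ((X - 1)^6 - X^6) * ((X - 1) ^ (6*n+5) * ((X - 1) ^ 2 - (X - 1) + 1)) := by
        ring
      rw [e]
      exact dvd_add (Dvd.dvd.mul_left ih _) (Dvd.dvd.mul_right key _)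

theorem dvd_case_mod_six (k : ℕ) (hk : 2 ≤ k) (hkm : k % 6 = 5) :
    (X ^ 2 - X + 1 : ℚ[X]) ∣
      X ^ k * ((X + 1) ^ 2 - (X + 1) + 1) +
        (X - 1) ^ k * ((X - 1) ^ 2 - (X - 1) + 1) := by
  obtain ⟨m, rfl⟩ : ∃ m, k = 6*m+5 := ⟨k/6, by omega⟩
  exact aux_dvd m
end

section
/- For every integer k ≥ 2 with k ≡ 2 (mod 6), the polynomial x² − x + 1 divides xᵏ·((x+1)² − (x+1) + 1) − (x−1)ᵏ·((x−1)² − (x−1) + 1) in ℚ[x]. -/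
open Polynomial

theorem dvd_alt_case_mod_six (k : ℕ) (hk : 2 ≤ k) (hkm : k % 6 = 2) :
    (X ^ 2 - X + 1 : ℚ[X]) ∣
      X ^ k * ((X + 1) ^ 2 - (X + 1) + 1) -
        (X - 1) ^ k * ((X - 1) ^ 2 - (X - 1) + 1) := by
  obtain ⟨m, rfl⟩ : ∃ m, k = 6 * m + 2 := ⟨k / 6, by omega⟩
  set P : ℚ[X] := X ^ 2 - X + 1 with hP
  have h6 : P ∣ X ^ 6 - 1 := ⟨(X ^ 3 - 1) * (X + 1), by ring⟩
  have h6' : P ∣ (X - 1) ^ 6 - 1 := ⟨(X - 2) * ((X - 1) ^ 3 + 1), by ring⟩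
  have h1 : P ∣ (X : ℚ[X]) ^ (6 * m) - 1 := by
    have := h6.trans (sub_dvd_pow_sub_pow ((X : ℚ[X]) ^ 6) 1 m)
    simpa [pow_mul] using this
  have h2 : P ∣ ((X : ℚ[X]) - 1) ^ (6 * m) - 1 := by
    have := h6'.trans (sub_dvd_pow_sub_pow (((X : ℚ[X]) - 1) ^ 6) 1 m)
    simpa [pow_mul] using this
  have key : (X : ℚ[X]) ^ (6 * m + 2) * ((X + 1) ^ 2 - (X + 1) + 1) -
      (X - 1) ^ (6 * m + 2) * ((X - 1) ^ 2 - (X - 1) + 1) =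
      ((X : ℚ[X]) ^ (6 * m) - 1) * (X ^ 2 * ((X + 1) ^ 2 - (X + 1) + 1)) -
      (((X : ℚ[X]) - 1) ^ (6 * m) - 1) * ((X - 1) ^ 2 * ((X - 1) ^ 2 - (X - 1) + 1)) +
      P * (6 * X - 3) := by
    rw [hP]; ring
  rw [key]
  exact dvd_add (dvd_sub (h1.mul_right _) (h2.mul_right _)) (Dvd.intro _ rfl)
end

section
/- For every integer k ≥ 0 and N ≥ 1, define the convergents (p_k(N), q_k(N)) of the continued fraction [[∑_{1≤j≤k}(−1)^{j−1}/j, 2k+1], [(−1)^k, n²]], i.e., a(0) = ∑_{1≤j≤k}(−1)^{j−1}/j, a(n) = 2k+1 for n ≥ 1, b(0) = (−1)^k, b(n) = n² for n ≥ 1. Then lim_{N→∞} p_k(N)/q_k(N) = log 2. -/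
open Filter Finset Real Topology

noncomputable def Sa (k : ℕ) : ℝ := ∑ j ∈ Finset.Icc 1 k, (-1 : ℝ) ^ (j - 1) / j

lemma Sa_succ (k : ℕ) : Sa (k + 1) = Sa k + (-1 : ℝ) ^ k / (k + 1) := by
  unfold Sa
  rw [Finset.sum_Icc_succ_top (by omega : 1 ≤ k + 1)]
  norm_num

lemma Sa_eq_range (n : ℕ) :
    Sa n = ∑ i ∈ Finset.range n, (-1 : ℝ) ^ i * (1 / ((i : ℝ) + 1)) := by
  induction n with
  | zero => simp [Sa]
  | succ n ih => rw [Sa_succ, Finset.sum_range_succ, ih]; ring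

lemma tendsto_Sa : Tendsto Sa atTop (𝓝 (Real.log 2)) := by
  set f : ℕ → ℝ := fun i => (-1 : ℝ) ^ i * (1 / ((i : ℝ) + 1)) with hf
  have hanti : Antitone (fun i : ℕ => 1 / ((i : ℝ) + 1)) := by
    intro a b hab
    apply one_div_le_one_div_of_le (by positivity)
    have : (a : ℝ) ≤ b := Nat.cast_le.mpr hab
    linarith
  have h0 : Tendsto (fun i : ℕ => 1 / ((i : ℝ) + 1)) atTop (𝓝 0) :=
    tendsto_one_div_add_atTop_nhds_zero_nat
  obtain ⟨l, hl⟩ := hanti.tendsto_alternating_series_of_tendsto_zero h0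
  have hl' : Tendsto (fun n => ∑ i ∈ Finset.range n, f i) atTop (𝓝 l) := hl
  have habel := Real.tendsto_tsum_powerSeries_nhdsWithin_lt hl'
  have hev : ∀ᶠ x in 𝓝[<] (1 : ℝ), x ∈ Set.Ioo (0 : ℝ) 1 := by
    rw [eventually_nhdsWithin_iff]
    filter_upwards [eventually_gt_nhds (by norm_num : (0:ℝ) < 1)] with x hx hx'
    exact ⟨hx, hx'⟩
  have heq : ∀ᶠ x in 𝓝[<] (1 : ℝ),
      (∑' n, f n * x ^ n) = Real.log (1 + x) / x := by
    filter_upwards [hev] with x hx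
    have hx0 : x ≠ 0 := ne_of_gt hx.1
    have habs : |(-x)| < 1 := by
      rw [abs_neg, abs_of_pos hx.1]; exact hx.2
    have hs := Real.hasSum_pow_div_log_of_abs_lt_one habs
    have hs2 := hs.div_const (-x)
    have : (fun n : ℕ => (-x) ^ (n + 1) / ((n : ℝ) + 1) / (-x)) = fun n => f n * x ^ n := by
      funext n
      rw [hf]
      simp only [pow_succ]
      rw [neg_pow]
      field_simp
    rw [this] at hs2
    rw [hs2.tsum_eq, sub_neg_eq_add, neg_div_neg_eq]
  have hlog : Tendsto (fun x : ℝ => Real.log (1 + x) / x) (𝓝[<] (1:ℝ)) (𝓝 (Real.log 2)) := by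
    have hc : ContinuousAt (fun x : ℝ => Real.log (1 + x) / x) 1 := by
      apply ContinuousAt.div
      · exact (Real.continuousAt_log (by norm_num)).comp (by fun_prop)
      · exact continuousAt_id
      · norm_num
    have h2 : Tendsto (fun x : ℝ => Real.log (1 + x) / x) (𝓝[<] (1:ℝ)) (𝓝 (Real.log (1+1) / 1)) :=
      hc.tendsto.mono_left nhdsWithin_le_nhds
    norm_num at h2
    exact h2
  have hcongr : Tendsto (fun x : ℝ => ∑' n, f n * x ^ n) (𝓝[<] (1:ℝ)) (𝓝 (Real.log 2)) :=
    hlog.congr' (heq.mono fun x h => h.symm)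
  have hlu : l = Real.log 2 := tendsto_nhds_unique habel hcongr
  rw [← hlu]
  have hSf : Sa = fun n => ∑ i ∈ Finset.range n, f i := funext Sa_eq_range
  rw [hSf]
  exact hl'

noncomputable def Pa (k : ℕ) : ℕ → ℝ
  | 0 => Sa k
  | 1 => (2 * (k : ℝ) + 1) * Sa k + (-1 : ℝ) ^ k
  | (n + 2) => (2 * (k : ℝ) + 1) * Pa k (n + 1) + ((n : ℝ) + 1) ^ 2 * Pa k n

noncomputable def Qa (k : ℕ) : ℕ → ℝ
  | 0 => 1
  | 1 => 2 * (k : ℝ) + 1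
  | (n + 2) => (2 * (k : ℝ) + 1) * Qa k (n + 1) + ((n : ℝ) + 1) ^ 2 * Qa k n

lemma two_step {motive : ℕ → Prop} (h0 : motive 0) (h1 : motive 1)
    (hs : ∀ n, motive n → motive (n + 1) → motive (n + 2)) : ∀ n, motive n
  | 0 => h0
  | 1 => h1
  | (n + 2) => hs n (two_step h0 h1 hs n) (two_step h0 h1 hs (n + 1))

lemma Qa_pos (k : ℕ) : ∀ n, 0 < Qa k n := by
  refine two_step ?_ ?_ ?_
  · rw [Qa]; norm_num
  · rw [Qa]; positivity
  · intro n ih0 ih1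
    rw [Qa]
    have h1 : (0:ℝ) < (2 * (k : ℝ) + 1) * Qa k (n + 1) := by positivity
    nlinarith [sq_nonneg ((n : ℝ) + 1)]

lemma key_aux (k : ℕ) (X Y : ℕ → ℝ)
    (hX : ∀ n : ℕ, X (n + 2) = (2 * (k : ℝ) + 3) * X (n + 1) + ((n : ℝ) + 1) ^ 2 * X n)
    (hY : ∀ n : ℕ, Y (n + 2) = (2 * (k : ℝ) + 1) * Y (n + 1) + ((n : ℝ) + 1) ^ 2 * Y n)
    (h0 : ((k : ℝ) + 1) * X 0 = Y 1 + (0 - (k : ℝ)) * Y 0)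
    (h1 : ((k : ℝ) + 1) * X 1 = Y 2 + (1 - (k : ℝ)) * Y 1) :
    ∀ n, ((k : ℝ) + 1) * X n = Y (n + 1) + ((n : ℝ) - k) * Y n := by
  refine two_step (by simpa using h0) (by simpa using h1) ?_
  intro n ih0 ih1
  push_cast at ih0 ih1 ⊢
  have e2 := hY (n + 1)
  push_cast at e2
  linear_combination ((k : ℝ) + 1) * hX n + (2 * (k : ℝ) + 3) * ih1 +
    ((n : ℝ) + 1) ^ 2 * ih0 - e2 + ((k : ℝ) - (n : ℝ)) * hY n

lemma keyP (k : ℕ) :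
    ∀ n, ((k : ℝ) + 1) * Pa (k + 1) n = Pa k (n + 1) + ((n : ℝ) - k) * Pa k n := by
  refine key_aux k (Pa (k + 1)) (Pa k) ?_ (fun n => by rw [Pa]) ?_ ?_
  · intro n
    rw [Pa]
    push_cast
    ring
  · rw [Pa, Pa, Pa, Sa_succ]
    have hk : ((k : ℝ) + 1) ≠ 0 := by positivity
    field_simp
    ring
  · rw [Pa, Pa, Pa, Pa, Pa, Sa_succ, pow_succ]
    have hk : ((k : ℝ) + 1) ≠ 0 := by positivity
    push_cast
    field_simp
    ring

lemma keyQ (k : ℕ) :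
    ∀ n, ((k : ℝ) + 1) * Qa (k + 1) n = Qa k (n + 1) + ((n : ℝ) - k) * Qa k n := by
  refine key_aux k (Qa (k + 1)) (Qa k) ?_ (fun n => by rw [Qa]) ?_ ?_
  · intro n
    rw [Qa]
    push_cast
    ring
  · rw [Qa, Qa, Qa]
    push_cast
    ring
  · rw [Qa, Qa, Qa, Qa, Qa]
    push_cast
    ring

lemma Qa_zero (n : ℕ) : Qa 0 n = (n.factorial : ℝ) := by
  induction n using two_step with
  | h0 => rw [Qa]; norm_num
  | h1 => rw [Qa]; norm_num
  | hs n ih0 ih1 =>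
    rw [Qa, ih0, ih1]
    simp only [Nat.factorial_succ]
    push_cast
    ring

lemma Pa_zero (n : ℕ) : Pa 0 n = (n.factorial : ℝ) * Sa n := by
  induction n using two_step with
  | h0 => rw [Pa]; norm_num
  | h1 =>
    rw [Pa]
    rw [show (1 : ℕ) = 0 + 1 from rfl, Sa_succ]
    norm_num [Sa]
  | hs n ih0 ih1 =>
    have hs2 : Sa (n + 2) = Sa (n + 1) + (-1 : ℝ) ^ (n + 1) / ((n : ℝ) + 1 + 1) := by
      have := Sa_succ (n + 1); push_cast at this ⊢; exact this
    have hs1 : Sa (n + 1) = Sa n + (-1 : ℝ) ^ n / ((n : ℝ) + 1) := by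
      have := Sa_succ n; push_cast at this ⊢; exact this
    rw [Pa, ih0, ih1, hs2, hs1]
    simp only [Nat.factorial_succ]
    have h1 : ((n : ℝ) + 1) ≠ 0 := by positivity
    have h2 : ((n : ℝ) + 1 + 1) ≠ 0 := by positivity
    push_cast
    field_simp
    ring

lemma mediant_bound {A B C D d L : ℝ} (hC : 0 < C) (hD : 0 < D) (hd : 0 ≤ d) :
    |(A + d * B) / (C + d * D) - L| ≤ |A / C - L| + |B / D - L| := by
  have hdD : 0 ≤ d * D := mul_nonneg hd hD.le
  have hCd : 0 < C + d * D := by linarith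
  have e : (A + d * B) / (C + d * D) - L =
      (C * (A / C - L) + (d * D) * (B / D - L)) / (C + d * D) := by
    field_simp
    ring
  rw [e, abs_div, abs_of_pos hCd, div_le_iff₀ hCd]
  have h1 : |C * (A / C - L) + d * D * (B / D - L)| ≤
      C * |A / C - L| + d * D * |B / D - L| := by
    refine (abs_add_le _ _).trans ?_
    rw [abs_mul, abs_mul, abs_of_pos hC, abs_of_nonneg hdD]
  nlinarith [abs_nonneg (A / C - L), abs_nonneg (B / D - L)]

lemma tendsto_Pa_div_Qa (k : ℕ) :
    Tendsto (fun n => Pa k n / Qa k n) atTop (𝓝 (Real.log 2)) := by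
  induction k with
  | zero =>
    have he : ∀ n, Pa 0 n / Qa 0 n = Sa n := by
      intro n
      rw [Pa_zero, Qa_zero]
      have : (n.factorial : ℝ) ≠ 0 := by positivity
      field_simp
    exact tendsto_Sa.congr (fun n => (he n).symm)
  | succ k ih =>
    set L := Real.log 2
    have habs : Tendsto (fun n => |Pa k n / Qa k n - L|) atTop (𝓝 0) := by
      have := tendsto_iff_norm_sub_tendsto_zero.mp ih
      simpa [Real.norm_eq_abs] using this
    have habs' : Tendsto (fun n => |Pa k (n + 1) / Qa k (n + 1) - L|) atTop (𝓝 0) :=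
      habs.comp (tendsto_add_atTop_nat 1)
    have hsum : Tendsto
        (fun n => |Pa k (n + 1) / Qa k (n + 1) - L| + |Pa k n / Qa k n - L|)
        atTop (𝓝 0) := by
      simpa using habs'.add habs
    rw [tendsto_iff_norm_sub_tendsto_zero]
    simp only [Real.norm_eq_abs]
    refine squeeze_zero' (Eventually.of_forall fun n => abs_nonneg _) ?_ hsum
    rw [eventually_atTop]
    refine ⟨k, fun n hn => ?_⟩
    have hk1 : ((k : ℝ) + 1) ≠ 0 := by positivity
    have hratio : Pa (k + 1) n / Qa (k + 1) n =
        (Pa k (n + 1) + ((n : ℝ) - k) * Pa k n) /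
        (Qa k (n + 1) + ((n : ℝ) - k) * Qa k n) := by
      rw [← keyP k n, ← keyQ k n, mul_div_mul_left _ _ hk1]
    rw [hratio]
    exact mediant_bound (Qa_pos k (n + 1)) (Qa_pos k n)
      (by
        have : (k : ℝ) ≤ n := Nat.cast_le.mpr hn
        linarith)

theorem log_two_cf_family (k : ℕ)
    (p q : ℕ → ℝ)
    (hp0 : p 0 = ∑ j ∈ Finset.Icc 1 k, (-1 : ℝ) ^ (j - 1) / j)
    (hq0 : q 0 = 1)
    (hp1 : p 1 = (2 * k + 1) * (∑ j ∈ Finset.Icc 1 k, (-1 : ℝ) ^ (j - 1) / j) + (-1 : ℝ) ^ k)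
    (hq1 : q 1 = 2 * k + 1)
    (hp : ∀ n : ℕ, 2 ≤ n →
      p n = (2 * k + 1) * p (n - 1) + ((n : ℝ) - 1) ^ 2 * p (n - 2))
    (hq : ∀ n : ℕ, 2 ≤ n →
      q n = (2 * k + 1) * q (n - 1) + ((n : ℝ) - 1) ^ 2 * q (n - 2)) :
    Filter.Tendsto (fun N => p N / q N) Filter.atTop (nhds (Real.log 2)) := by
  have hpq : ∀ n, p n = Pa k n ∧ q n = Qa k n := by
    refine two_step ?_ ?_ ?_
    · rw [Pa, Qa]
      exact ⟨hp0, hq0⟩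
    · rw [Pa, Qa]
      exact ⟨hp1, hq1⟩
    · intro n ih0 ih1
      have h2p := hp (n + 2) (by omega)
      have h2q := hq (n + 2) (by omega)
      simp only [show n + 2 - 1 = n + 1 from rfl, show n + 2 - 2 = n from rfl] at h2p h2q
      constructor
      · rw [Pa, h2p, ih0.1, ih1.1]
        push_cast
        ring
      · rw [Qa, h2q, ih0.2, ih1.2]
        push_cast
        ring
  exact (tendsto_Pa_div_Qa k).congr fun n => by rw [(hpq n).1, (hpq n).2]
end

section
/- For every integer k ≥ 0, the continued fraction [[∑_{1≤j≤k} 1/j³, (2n−1)(n²−n+2k²+2k+1)], [1, −n⁶]] converges to ζ(3): with a(0) = ∑_{1≤j≤k} 1/j³, a(n) = (2n−1)(n²−n+2k²+2k+1) for n ≥ 1, b(0) = 1, b(n) = −n⁶ for n ≥ 1, the convergents p(N)/q(N) tend to ζ(3) as N → ∞. -/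
/-!
Write `B n j = C(n, j) C(n + j, j)` (`aperyBinom`). The denominators are `q n = n!³ D(n)` with
`D(n) = ∑_{j ≤ k} B k j B n j` (`aperyDenom`), and the numerators are
`p n = n!³ (D(n) S(n) + E(n))`, where `S(n) = ∑_{i ≤ n} 1/i³` and
`E(n) = ∑_{1 ≤ i ≤ k} (∑_{j < i} B k j B n j) / i³` (`aperyCorr`). Both closed forms satisfy the
recurrence by creative telescoping: the recurrence operator in `n`, applied to `B k j B n j`, is a
difference in `j` of an explicit certificate (`aperyCert`), so it kills the truncated sums
`∑_{j < i}` up to a boundary term that vanishes for `i = k + 1`. Hence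
`p n / q n = S(n) + E(n) / D(n)`, and `E(n) / D(n) = O(1/n)` because `D(n) ≥ B n k` while every
term of `E(n)` involves only `B n j` with `j < k`.
-/

open Finset Filter Topology Nat

def aperyBinom (n j : ℕ) : ℝ := n.choose j * (n + j).choose j

lemma aperyBinom_nonneg (n j : ℕ) : 0 ≤ aperyBinom n j := by
  unfold aperyBinom; positivity

lemma aperyBinom_zero_right (n : ℕ) : aperyBinom n 0 = 1 := by simp [aperyBinom]

lemma aperyBinom_one_right (n : ℕ) : aperyBinom n 1 = n * (n + 1) := by
  simp [aperyBinom]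

lemma aperyBinom_eq_zero {n j : ℕ} (h : n < j) : aperyBinom n j = 0 := by
  simp [aperyBinom, Nat.choose_eq_zero_of_lt h]

lemma aperyBinom_succ_left_mul (n j : ℕ) :
    aperyBinom (n + 1) j * ((n : ℝ) + 1 - j) = aperyBinom n j * ((n : ℝ) + 1 + j) := by
  rcases le_or_gt j (n + 1) with hj | hj
  · have h₁ : (n.choose j : ℝ) * (n + 1) = (n + 1).choose j * ((n : ℝ) + 1 - j) := by
      exact_mod_cast Nat.choose_mul_succ_eq n j
    have h₂ : ((n + j).choose j : ℝ) * (n + 1 + j) = (n + 1 + j).choose j * ((n : ℝ) + 1) := by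
      have := Nat.choose_mul_succ_eq (n + j) j
      rw [show n + j + 1 - j = n + 1 by omega, show n + j + 1 = n + 1 + j by omega] at this
      exact_mod_cast this
    have hn : (n : ℝ) + 1 ≠ 0 := by positivity
    apply mul_right_cancel₀ hn
    unfold aperyBinom
    linear_combination (-((n + 1 + j).choose j * ((n : ℝ) + 1))) * h₁
      - (n.choose j * ((n : ℝ) + 1)) * h₂
  · rw [aperyBinom_eq_zero hj, aperyBinom_eq_zero (by omega)]
    ring

lemma aperyBinom_succ_right_mul (n j : ℕ) :
    aperyBinom n (j + 1) * ((j : ℝ) + 1) ^ 2 = aperyBinom n j * ((n : ℝ) - j) * (n + j + 1) := by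
  rcases le_or_gt j n with hj | hj
  · have h₁ : (n.choose (j + 1) : ℝ) * (j + 1) = n.choose j * ((n : ℝ) - j) := by
      exact_mod_cast Nat.choose_succ_right_eq n j
    have h₂ : ((n + j + 1 : ℕ) : ℝ) * (n + j).choose j
        = (n + (j + 1)).choose (j + 1) * (j + 1) := by
      exact_mod_cast Nat.add_one_mul_choose_eq (n + j) j
    unfold aperyBinom
    push_cast at h₂ ⊢
    linear_combination ((n + (j + 1)).choose (j + 1) * ((j : ℝ) + 1)) * h₁
      - (n.choose j * ((n : ℝ) - j)) * h₂
  · rw [aperyBinom_eq_zero hj, aperyBinom_eq_zero (by omega)]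
    ring

def aperyCoeff (k : ℕ) (x : ℝ) : ℝ := (2 * x - 1) * (x ^ 2 - x + 2 * (k : ℝ) ^ 2 + 2 * k + 1)

def aperyCert (k m j : ℕ) : ℝ :=
  (j : ℝ) ^ 3 * aperyBinom k j * (aperyBinom m j - aperyBinom (m + 2) j)

lemma aperyBinom_telescope (k m j : ℕ) :
    aperyBinom k j * (((m : ℝ) + 2) ^ 3 * aperyBinom (m + 2) j
        - aperyCoeff k ((m : ℝ) + 2) * aperyBinom (m + 1) j + ((m : ℝ) + 1) ^ 3 * aperyBinom m j)
      = aperyCert k m (j + 1) - aperyCert k m j := by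
  -- Everything becomes a multiple of `B k j` or `B (m + 2) j` with positive denominators, so
  -- no case split on `j ≤ m` is needed.
  have hj : ((j : ℝ) + 1) ^ 2 ≠ 0 := by positivity
  have hk := (eq_div_iff hj).2 (aperyBinom_succ_right_mul k j)
  have hm := (eq_div_iff hj).2 (aperyBinom_succ_right_mul m j)
  have hm₂ := (eq_div_iff hj).2 (aperyBinom_succ_right_mul (m + 2) j)
  have h₀ : aperyBinom m j = aperyBinom (m + 1) j * ((m : ℝ) + 1 - j) / ((m : ℝ) + 1 + j) :=
    (eq_div_iff (by positivity)).2 (aperyBinom_succ_left_mul m j).symm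
  have h₁ : aperyBinom (m + 1) j
      = aperyBinom (m + 2) j * ((m : ℝ) + 2 - j) / ((m : ℝ) + 2 + j) := by
    refine (eq_div_iff (by positivity)).2 ?_
    have := aperyBinom_succ_left_mul (m + 1) j
    push_cast at this
    linear_combination -this
  simp only [aperyCert, aperyCoeff]
  push_cast at hm₂ ⊢
  rw [hk, hm, hm₂, h₀, h₁]
  field_simp
  ring

def aperyPartial (k i n : ℕ) : ℝ := ∑ j ∈ range i, aperyBinom k j * aperyBinom n j

def aperyDenom (k n : ℕ) : ℝ := aperyPartial k (k + 1) n

lemma aperyPartial_nonneg (k i n : ℕ) : 0 ≤ aperyPartial k i n :=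
  sum_nonneg fun j _ => mul_nonneg (aperyBinom_nonneg k j) (aperyBinom_nonneg n j)

noncomputable def aperyCorr (k n : ℕ) : ℝ := ∑ i ∈ Icc 1 k, aperyPartial k i n / (i : ℝ) ^ 3

lemma aperyPartial_rec (k i m : ℕ) :
    ((m : ℝ) + 2) ^ 3 * aperyPartial k i (m + 2)
        - aperyCoeff k ((m : ℝ) + 2) * aperyPartial k i (m + 1)
      + ((m : ℝ) + 1) ^ 3 * aperyPartial k i m = aperyCert k m i := by
  have hsum := sum_range_sub (aperyCert k m) i
  rw [← sum_congr rfl fun j _ => aperyBinom_telescope k m j] at hsum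
  rw [show aperyCert k m 0 = 0 by simp [aperyCert], sub_zero] at hsum
  rw [← hsum]
  simp only [aperyPartial, mul_sum, ← sum_sub_distrib, ← sum_add_distrib]
  exact sum_congr rfl fun j _ => by ring

lemma aperyDenom_rec (k m : ℕ) :
    ((m : ℝ) + 2) ^ 3 * aperyDenom k (m + 2)
      = aperyCoeff k ((m : ℝ) + 2) * aperyDenom k (m + 1) - ((m : ℝ) + 1) ^ 3 * aperyDenom k m := by
  have h := aperyPartial_rec k (k + 1) m
  rw [aperyCert, aperyBinom_eq_zero (Nat.lt_succ_self k)] at h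
  unfold aperyDenom
  linear_combination h

lemma aperyCorr_rec (k m : ℕ) :
    ((m : ℝ) + 2) ^ 3 * aperyCorr k (m + 2)
      = aperyCoeff k ((m : ℝ) + 2) * aperyCorr k (m + 1) - ((m : ℝ) + 1) ^ 3 * aperyCorr k m
        + aperyDenom k m - aperyDenom k (m + 2) := by
  have hL : ∑ i ∈ Icc 1 k, aperyCert k m i / (i : ℝ) ^ 3
      = ((m : ℝ) + 2) ^ 3 * aperyCorr k (m + 2) - aperyCoeff k ((m : ℝ) + 2) * aperyCorr k (m + 1)
        + ((m : ℝ) + 1) ^ 3 * aperyCorr k m := by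
    simp only [aperyCorr, mul_sum, ← aperyPartial_rec, ← sum_sub_distrib, ← sum_add_distrib]
    exact sum_congr rfl fun i _ => by ring
  have hcert : ∑ i ∈ Icc 1 k, aperyCert k m i / (i : ℝ) ^ 3
      = ∑ i ∈ Icc 1 k, aperyBinom k i * (aperyBinom m i - aperyBinom (m + 2) i) := by
    refine sum_congr rfl fun i hi => ?_
    have : (i : ℝ) ≠ 0 := by have := (mem_Icc.1 hi).1; positivity
    rw [aperyCert]; field_simp
  have hdenom : aperyDenom k m - aperyDenom k (m + 2)
      = ∑ i ∈ Icc 1 k, aperyBinom k i * (aperyBinom m i - aperyBinom (m + 2) i) := by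
    rw [aperyDenom, aperyDenom, aperyPartial, aperyPartial, ← sum_sub_distrib,
      Nat.range_succ_eq_Icc_zero, ← insert_Icc_add_one_left_eq_Icc (Nat.zero_le k),
      sum_insert (by simp)]
    simp only [aperyBinom_zero_right, sub_self, zero_add]
    exact sum_congr rfl fun i _ => by ring
  linear_combination -hL + hcert - hdenom

noncomputable def zetaThreePartial (n : ℕ) : ℝ := ∑ j ∈ Icc 1 n, 1 / (j : ℝ) ^ 3

lemma zetaThreePartial_nonneg (n : ℕ) : 0 ≤ zetaThreePartial n :=
  sum_nonneg fun j _ => by positivity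

lemma zetaThreePartial_succ_mul (n : ℕ) :
    ((n : ℝ) + 1) ^ 3 * zetaThreePartial (n + 1) = ((n : ℝ) + 1) ^ 3 * zetaThreePartial n + 1 := by
  rw [zetaThreePartial, zetaThreePartial, sum_Icc_succ_top (by omega)]
  push_cast
  field_simp

lemma zetaThreePartial_one : zetaThreePartial 1 = 1 := by simp [zetaThreePartial]

lemma tendsto_zetaThreePartial :
    Tendsto (fun n => (zetaThreePartial n : ℂ)) atTop (𝓝 (riemannZeta 3)) := by
  have hsum := (Real.summable_one_div_nat_pow.2 (by norm_num : 1 < 3)).hasSum.tendsto_sum_nat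
  have hshift : ∀ n, ∑ j ∈ range (n + 1), 1 / (j : ℝ) ^ 3 = zetaThreePartial n := by
    intro n
    rw [Nat.range_succ_eq_Icc_zero, ← insert_Icc_add_one_left_eq_Icc (Nat.zero_le n),
      sum_insert (by simp)]
    simp [zetaThreePartial]
  have hzeta : riemannZeta 3 = ((∑' j : ℕ, 1 / (j : ℝ) ^ 3 : ℝ) : ℂ) := by
    simpa [Complex.ofReal_tsum] using zeta_nat_eq_tsum_of_gt_one (k := 3) (by norm_num)
  rw [hzeta]
  exact ((hsum.comp (tendsto_add_atTop_nat 1)).congr hshift).ofReal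

lemma aperyPartial_eq_aperyDenom {k i : ℕ} (h : k + 1 ≤ i) (n : ℕ) :
    aperyPartial k i n = aperyDenom k n :=
  eventually_constant_sum (fun j hj => by rw [aperyBinom_eq_zero (by omega), zero_mul]) h

lemma aperyPartial_zero_right {k i : ℕ} (h : 1 ≤ i) : aperyPartial k i 0 = 1 := by
  rw [aperyPartial, eventually_constant_sum (fun j hj => by
    rw [aperyBinom_eq_zero (show 0 < j by omega), mul_zero]) h]
  simp [aperyBinom_zero_right]

lemma aperyPartial_one_right {k i : ℕ} (h : 2 ≤ i) : aperyPartial k i 1 = aperyCoeff k 1 := by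
  rw [aperyPartial, eventually_constant_sum (fun j hj => by
    rw [aperyBinom_eq_zero (show 1 < j by omega), mul_zero]) h]
  simp [sum_range_succ, aperyBinom_zero_right, aperyBinom_one_right, aperyCoeff]
  ring

lemma aperyDenom_zero (k : ℕ) : aperyDenom k 0 = 1 := aperyPartial_zero_right (by omega)

lemma aperyDenom_one (k : ℕ) : aperyDenom k 1 = aperyCoeff k 1 := by
  rw [← aperyPartial_eq_aperyDenom (Nat.le_succ (k + 1)), aperyPartial_one_right (by omega)]

lemma aperyCorr_zero (k : ℕ) : aperyCorr k 0 = zetaThreePartial k :=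
  sum_congr rfl fun i hi => by rw [aperyPartial_zero_right (mem_Icc.1 hi).1]

lemma aperyCorr_one (k : ℕ) :
    aperyCorr k 1 = aperyCoeff k 1 * zetaThreePartial k + 1 - aperyCoeff k 1 := by
  rcases k with _ | k
  · norm_num [aperyCorr, zetaThreePartial, aperyCoeff]
  · have hpartial : ∀ i ∈ Icc 2 (k + 1), aperyPartial (k + 1) i 1 / (i : ℝ) ^ 3
        = aperyCoeff (k + 1) 1 * (1 / (i : ℝ) ^ 3) := fun i hi => by
      rw [aperyPartial_one_right (mem_Icc.1 hi).1]; ring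
    have hsplit : ∀ f : ℕ → ℝ, ∑ i ∈ Icc 1 (k + 1), f i = f 1 + ∑ i ∈ Icc 2 (k + 1), f i :=
      fun f => by rw [← insert_Icc_add_one_left_eq_Icc (by omega), sum_insert (by simp)]; rfl
    rw [aperyCorr, zetaThreePartial, hsplit, hsplit, sum_congr rfl hpartial, ← mul_sum,
      aperyPartial, sum_range_one]
    simp only [aperyBinom_zero_right]
    ring

noncomputable def aperyNum (k n : ℕ) : ℝ := aperyDenom k n * zetaThreePartial n + aperyCorr k n

lemma aperyNum_rec (k m : ℕ) :
    ((m : ℝ) + 2) ^ 3 * aperyNum k (m + 2)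
      = aperyCoeff k ((m : ℝ) + 2) * aperyNum k (m + 1) - ((m : ℝ) + 1) ^ 3 * aperyNum k m := by
  have hS₁ := zetaThreePartial_succ_mul m
  have hS₂ := zetaThreePartial_succ_mul (m + 1)
  push_cast at hS₂
  unfold aperyNum
  linear_combination aperyCorr_rec k m + aperyDenom k (m + 2) * hS₂ - aperyDenom k m * hS₁
    + zetaThreePartial (m + 1) * aperyDenom_rec k m

lemma aperyCorr_nonneg (k n : ℕ) : 0 ≤ aperyCorr k n :=
  sum_nonneg fun i _ => div_nonneg (aperyPartial_nonneg k i n) (by positivity)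

lemma one_le_aperyDenom (k n : ℕ) : 1 ≤ aperyDenom k n := by
  have h := single_le_sum (f := fun j => aperyBinom k j * aperyBinom n j)
    (fun j _ => mul_nonneg (aperyBinom_nonneg k j) (aperyBinom_nonneg n j))
    (mem_range.2 (Nat.succ_pos k))
  simpa [aperyBinom_zero_right, aperyDenom, aperyPartial] using h

lemma aperyBinom_le_aperyDenom (k n : ℕ) : aperyBinom n k ≤ aperyDenom k n := by
  have h := single_le_sum (f := fun j => aperyBinom k j * aperyBinom n j)
    (fun j _ => mul_nonneg (aperyBinom_nonneg k j) (aperyBinom_nonneg n j))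
    (mem_range.2 (Nat.lt_succ_self k))
  have hkk : (1 : ℝ) ≤ aperyBinom k k := by
    rw [aperyBinom, Nat.choose_self, Nat.cast_one, one_mul, Nat.one_le_cast]
    exact Nat.choose_pos (by omega)
  exact le_mul_of_one_le_left (aperyBinom_nonneg n k) hkk |>.trans h

lemma aperyCorr_le (k n : ℕ) : aperyCorr k n ≤ zetaThreePartial k * aperyPartial k k n := by
  rw [aperyCorr, zetaThreePartial, sum_mul]
  refine sum_le_sum fun i hi => ?_
  have hmono : aperyPartial k i n ≤ aperyPartial k k n :=
    sum_le_sum_of_subset_of_nonneg (range_mono (mem_Icc.1 hi).2)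
      fun j _ _ => mul_nonneg (aperyBinom_nonneg k j) (aperyBinom_nonneg n j)
  rw [div_eq_mul_one_div, mul_comm]
  exact mul_le_mul_of_nonneg_left hmono (by positivity)

lemma aperyBinom_le_succ_right {n j : ℕ} (h : 2 * j + 1 ≤ n) :
    aperyBinom n j ≤ aperyBinom n (j + 1) := by
  have hrec := aperyBinom_succ_right_mul n j
  have hj : ((j : ℝ) + 1) ≤ n - j := by
    have : ((2 * j + 1 : ℕ) : ℝ) ≤ n := by exact_mod_cast h
    push_cast at this; linarith
  have hsq : ((j : ℝ) + 1) ^ 2 ≤ ((n : ℝ) - j) * (n + j + 1) := by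
    nlinarith
  have hpos : (0 : ℝ) < ((j : ℝ) + 1) ^ 2 := by positivity
  nlinarith [mul_le_mul_of_nonneg_left hsq (aperyBinom_nonneg n j)]

lemma aperyBinom_mono_right {n j l : ℕ} (hjl : j ≤ l) (h : 2 * l ≤ n) :
    aperyBinom n j ≤ aperyBinom n l := by
  induction l, hjl using Nat.le_induction with
  | base => exact le_rfl
  | succ l _ ih => exact (ih (by omega)).trans (aperyBinom_le_succ_right (by omega))

lemma aperyBinom_mul_sub_le {n j k : ℕ} (hj : j < k) (hn : 2 * k ≤ n) :
    aperyBinom n j * ((n : ℝ) - k) ≤ k * aperyBinom n k := by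
  have hrec := aperyBinom_succ_right_mul n j
  have hjk : ((j : ℝ) + 1) ≤ k := by exact_mod_cast hj
  have hkn : (k : ℝ) ≤ n := by exact_mod_cast (show k ≤ n by omega)
  have hB := aperyBinom_nonneg n j
  calc aperyBinom n j * ((n : ℝ) - k) ≤ aperyBinom n j * ((n : ℝ) - j) := by
        gcongr
    _ ≤ ((j : ℝ) + 1) * aperyBinom n (j + 1) := by
        nlinarith [mul_le_mul_of_nonneg_left (show (j : ℝ) + 1 ≤ n + j + 1 by linarith)
          (mul_nonneg hB (show (0 : ℝ) ≤ n - j by linarith))]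
    _ ≤ k * aperyBinom n k := mul_le_mul hjk (aperyBinom_mono_right hj hn)
        (aperyBinom_nonneg n (j + 1)) k.cast_nonneg

lemma aperyPartial_mul_sub_le {k n : ℕ} (hn : 2 * k ≤ n) :
    aperyPartial k k n * ((n : ℝ) - k) ≤ k * (∑ j ∈ range k, aperyBinom k j) * aperyBinom n k := by
  rw [aperyPartial, sum_mul, mul_sum, sum_mul]
  refine sum_le_sum fun j hj => ?_
  have := aperyBinom_mul_sub_le (mem_range.1 hj) hn
  nlinarith [aperyBinom_nonneg k j]

lemma tendsto_aperyCorr_div_aperyDenom (k : ℕ) :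
    Tendsto (fun n => aperyCorr k n / aperyDenom k n) atTop (𝓝 0) := by
  set c := zetaThreePartial k * (k * ∑ j ∈ range k, aperyBinom k j)
  have hc : 0 ≤ c := mul_nonneg (zetaThreePartial_nonneg k)
    (mul_nonneg k.cast_nonneg (sum_nonneg fun j _ => aperyBinom_nonneg k j))
  have hbound : ∀ n, 2 * k + 1 ≤ n → aperyCorr k n / aperyDenom k n ≤ c / ((n : ℝ) - k) := by
    intro n hn
    have hnk : (0 : ℝ) < n - k := by
      have : (k : ℝ) + 1 ≤ n := by exact_mod_cast (show k + 1 ≤ n by omega)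
      linarith
    have hD := one_le_aperyDenom k n
    rw [div_le_div_iff₀ (by linarith) hnk]
    calc aperyCorr k n * (n - k) ≤ zetaThreePartial k * aperyPartial k k n * (n - k) :=
          mul_le_mul_of_nonneg_right (aperyCorr_le k n) hnk.le
      _ ≤ zetaThreePartial k * (k * (∑ j ∈ range k, aperyBinom k j) * aperyBinom n k) := by
          rw [mul_assoc]
          exact mul_le_mul_of_nonneg_left (aperyPartial_mul_sub_le (by omega))
            (sum_nonneg fun j _ => by positivity)
      _ ≤ c * aperyDenom k n := by
          rw [← mul_assoc]
          exact mul_le_mul_of_nonneg_left (aperyBinom_le_aperyDenom k n) hc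
  have hlim : Tendsto (fun n : ℕ => c / ((n : ℝ) - k)) atTop (𝓝 0) :=
    tendsto_const_nhds.div_atTop (tendsto_atTop_add_const_right _ (-(k : ℝ))
      tendsto_natCast_atTop_atTop)
  refine tendsto_of_tendsto_of_tendsto_of_le_of_le' tendsto_const_nhds hlim ?_ ?_
  · exact Eventually.of_forall fun n =>
      div_nonneg (aperyCorr_nonneg k n) (zero_le_one.trans (one_le_aperyDenom k n))
  · exact eventually_atTop.2 ⟨2 * k + 1, hbound⟩

lemma eq_of_two_step_rec {R : Type*} [Ring R] {u v : ℕ → R} {a b : ℕ → R}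
    (hu : ∀ n, u (n + 2) = a n * u (n + 1) - b n * u n)
    (hv : ∀ n, v (n + 2) = a n * v (n + 1) - b n * v n)
    (h₀ : u 0 = v 0) (h₁ : u 1 = v 1) : u = v := by
  have key : ∀ n, u n = v n ∧ u (n + 1) = v (n + 1) := by
    intro n
    induction n with
    | zero => exact ⟨h₀, h₁⟩
    | succ n ih => exact ⟨ih.2, by rw [hu, hv, ih.1, ih.2]⟩
  exact funext fun n => (key n).1

lemma factorial_cube_mul_rec {x a : ℕ → ℝ}
    (hx : ∀ m : ℕ, ((m : ℝ) + 2) ^ 3 * x (m + 2) = a m * x (m + 1) - ((m : ℝ) + 1) ^ 3 * x m)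
    (m : ℕ) :
    ((m + 2)! : ℝ) ^ 3 * x (m + 2)
      = a m * (((m + 1)! : ℝ) ^ 3 * x (m + 1)) - ((m : ℝ) + 1) ^ 6 * ((m ! : ℝ) ^ 3 * x m) := by
  have h₁ : ((m + 1)! : ℝ) = ((m : ℝ) + 1) * m ! := by push_cast [Nat.factorial_succ]; ring
  have h₂ : ((m + 2)! : ℝ) = ((m : ℝ) + 2) * (m + 1)! := by push_cast [Nat.factorial_succ]; ring
  rw [h₂, h₁]
  linear_combination (((m : ℝ) + 1) * m !) ^ 3 * hx m

theorem zeta_three_cf_family (k : ℕ)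
    (p q : ℕ → ℝ)
    (hp0 : p 0 = ∑ j ∈ Finset.Icc 1 k, (1 : ℝ) / (j : ℝ) ^ 3)
    (hq0 : q 0 = 1)
    (hp1 : p 1 = (2 * 1 - 1) * (1 ^ 2 - 1 + 2 * (k : ℝ) ^ 2 + 2 * k + 1) *
      (∑ j ∈ Finset.Icc 1 k, (1 : ℝ) / (j : ℝ) ^ 3) + 1)
    (hq1 : q 1 = (2 * 1 - 1) * (1 ^ 2 - 1 + 2 * (k : ℝ) ^ 2 + 2 * k + 1))
    (hp : ∀ n : ℕ, 2 ≤ n →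
      p n = (2 * (n : ℝ) - 1) * ((n : ℝ) ^ 2 - n + 2 * (k : ℝ) ^ 2 + 2 * k + 1) * p (n - 1)
        - ((n : ℝ) - 1) ^ 6 * p (n - 2))
    (hq : ∀ n : ℕ, 2 ≤ n →
      q n = (2 * (n : ℝ) - 1) * ((n : ℝ) ^ 2 - n + 2 * (k : ℝ) ^ 2 + 2 * k + 1) * q (n - 1)
        - ((n : ℝ) - 1) ^ 6 * q (n - 2)) :
    Filter.Tendsto (fun N => ((p N / q N : ℝ) : ℂ)) Filter.atTop (nhds (riemannZeta 3)) := by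
  have hq' : q = fun n => (n ! : ℝ) ^ 3 * aperyDenom k n :=
    eq_of_two_step_rec (a := fun n => aperyCoeff k ((n + 2 : ℕ) : ℝ))
      (fun n => hq (n + 2) le_add_self)
      (fun n => by push_cast; linear_combination factorial_cube_mul_rec (aperyDenom_rec k) n)
      (by simp [hq0, aperyDenom_zero]) (by simp [hq1, aperyDenom_one, aperyCoeff])
  have hp' : p = fun n => (n ! : ℝ) ^ 3 * aperyNum k n :=
    eq_of_two_step_rec (a := fun n => aperyCoeff k ((n + 2 : ℕ) : ℝ))
      (fun n => hp (n + 2) le_add_self)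
      (fun n => by push_cast; linear_combination factorial_cube_mul_rec (aperyNum_rec k) n)
      (by simp [hp0, aperyNum, aperyDenom_zero, aperyCorr_zero, zetaThreePartial])
      (by
        rw [hp1, aperyNum, aperyDenom_one, aperyCorr_one, zetaThreePartial_one]
        simp only [aperyCoeff, zetaThreePartial]
        ring)
  have hratio : ∀ n, p n / q n = zetaThreePartial n + aperyCorr k n / aperyDenom k n := by
    intro n
    have := (zero_lt_one.trans_le (one_le_aperyDenom k n)).ne'
    rw [hp', hq']
    simp only [aperyNum]
    field_simp
  simp_rw [hratio]
  push_cast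
  simpa using tendsto_zetaThreePartial.add (tendsto_aperyCorr_div_aperyDenom k).ofReal
end

section
/- ∑_{n≥1} (n+1)/n³ = ζ(2) + ζ(3), and applying Euler's transform to f(n) = n³/(n+1), z = 1, followed by the equivalence transformation with r(0) = 1, r(n) = n² + n for n ≥ 1, yields: the convergents of the continued fraction with a(0) = 0, a(n) = 2n⁴ − 2n³ + 2n − 1 for n ≥ 1, b(0) = 2, b(n) = −(n⁸ + 2n⁷) for n ≥ 1, converge to ζ(2) + ζ(3). -/
open Finset

lemma pq_closed (p q : ℕ → ℝ)
    (hp0 : p 0 = 0) (hq0 : q 0 = 1)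
    (hp1 : p 1 = 2) (hq1 : q 1 = 2 * 1 ^ 4 - 2 * 1 ^ 3 + 2 * 1 - 1)
    (hp : ∀ n : ℕ, 2 ≤ n →
      p n = (2 * (n : ℝ) ^ 4 - 2 * (n : ℝ) ^ 3 + 2 * n - 1) * p (n - 1)
        - (((n : ℝ) - 1) ^ 8 + 2 * ((n : ℝ) - 1) ^ 7) * p (n - 2))
    (hq : ∀ n : ℕ, 2 ≤ n →
      q n = (2 * (n : ℝ) ^ 4 - 2 * (n : ℝ) ^ 3 + 2 * n - 1) * q (n - 1)
        - (((n : ℝ) - 1) ^ 8 + 2 * ((n : ℝ) - 1) ^ 7) * q (n - 2)) :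
    ∀ n : ℕ, q n = ((n.factorial : ℝ))^4 ∧
      p n = (∑ k ∈ Finset.range n, ((k:ℝ)+2)/((k:ℝ)+1)^3) * ((n.factorial : ℝ))^4 := by
  intro n
  induction n using Nat.twoStepInduction with
  | zero => simp [hp0, hq0]
  | one =>
    refine ⟨?_, ?_⟩
    · rw [hq1]; norm_num [Nat.factorial]
    · rw [hp1]; norm_num [Nat.factorial]
  | more n ih1 ih2 =>
    have h2 : 2 ≤ n + 2 := by omega
    have e1 : n + 2 - 1 = n + 1 := by omega
    have e2 : n + 2 - 2 = n := by omega
    have hfq := hq (n+2) h2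
    have hfp := hp (n+2) h2
    rw [e1, e2] at hfq hfp
    rw [ih2.1] at hfq
    rw [ih2.2] at hfp
    rw [ih1.1] at hfq
    rw [ih1.2] at hfp
    have hf1 : ((n+1).factorial : ℝ) = ((n:ℝ)+1) * n.factorial := by
      push_cast [Nat.factorial_succ]; ring
    have hf2 : ((n+2).factorial : ℝ) = ((n:ℝ)+2) * (((n:ℝ)+1) * n.factorial) := by
      push_cast [Nat.factorial_succ]; ring
    have hS1 : (∑ k ∈ Finset.range (n+1), ((k:ℝ)+2)/((k:ℝ)+1)^3)
        = (∑ k ∈ Finset.range n, ((k:ℝ)+2)/((k:ℝ)+1)^3) + ((n:ℝ)+2)/((n:ℝ)+1)^3 := by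
      rw [Finset.sum_range_succ]
    have hS2 : (∑ k ∈ Finset.range (n+2), ((k:ℝ)+2)/((k:ℝ)+1)^3)
        = (∑ k ∈ Finset.range (n+1), ((k:ℝ)+2)/((k:ℝ)+1)^3) + ((n:ℝ)+3)/((n:ℝ)+2)^3 := by
      rw [Finset.sum_range_succ]; congr 1; push_cast; ring
    have hn1 : ((n:ℝ)+1) ≠ 0 := by positivity
    have hn2 : ((n:ℝ)+2) ≠ 0 := by positivity
    constructor
    · rw [hfq, hf2, hf1]
      push_cast
      ring
    · rw [hfp, hf2, hf1, hS2, hS1]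
      push_cast
      field_simp
      ring

theorem zeta_two_add_zeta_three
    (p q : ℕ → ℝ)
    (hp0 : p 0 = 0) (hq0 : q 0 = 1)
    (hp1 : p 1 = 2) (hq1 : q 1 = 2 * 1 ^ 4 - 2 * 1 ^ 3 + 2 * 1 - 1)
    (hp : ∀ n : ℕ, 2 ≤ n →
      p n = (2 * (n : ℝ) ^ 4 - 2 * (n : ℝ) ^ 3 + 2 * n - 1) * p (n - 1)
        - (((n : ℝ) - 1) ^ 8 + 2 * ((n : ℝ) - 1) ^ 7) * p (n - 2))
    (hq : ∀ n : ℕ, 2 ≤ n →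
      q n = (2 * (n : ℝ) ^ 4 - 2 * (n : ℝ) ^ 3 + 2 * n - 1) * q (n - 1)
        - (((n : ℝ) - 1) ^ 8 + 2 * ((n : ℝ) - 1) ^ 7) * q (n - 2)) :
    ((∑' n : ℕ, ((n : ℝ) + 2) / ((n : ℝ) + 1) ^ 3 : ℝ) : ℂ)
        = riemannZeta 2 + riemannZeta 3 ∧
    Filter.Tendsto (fun N => ((p N / q N : ℝ) : ℂ)) Filter.atTop
      (nhds (riemannZeta 2 + riemannZeta 3)) := by
  have key := pq_closed p q hp0 hq0 hp1 hq1 hp hq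
  -- summability
  have hs2 : Summable (fun n : ℕ => 1/((n:ℝ)+1)^2) := by
    have := (Real.summable_one_div_nat_pow (p := 2)).mpr (by norm_num)
    exact_mod_cast (summable_nat_add_iff 1).mpr this
  have hs3 : Summable (fun n : ℕ => 1/((n:ℝ)+1)^3) := by
    have := (Real.summable_one_div_nat_pow (p := 3)).mpr (by norm_num)
    exact_mod_cast (summable_nat_add_iff 1).mpr this
  have hsplit : ∀ n : ℕ, ((n : ℝ) + 2) / ((n : ℝ) + 1) ^ 3
      = 1/((n:ℝ)+1)^2 + 1/((n:ℝ)+1)^3 := by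
    intro n
    have : ((n:ℝ)+1) ≠ 0 := by positivity
    field_simp
    ring
  have hsum : Summable (fun n : ℕ => ((n : ℝ) + 2) / ((n : ℝ) + 1) ^ 3) := by
    simpa only [hsplit] using hs2.add hs3
  have hzeta2 : riemannZeta 2 = ((∑' n : ℕ, 1/((n:ℝ)+1)^2 : ℝ) : ℂ) := by
    rw [zeta_eq_tsum_one_div_nat_add_one_cpow (by norm_num)]
    rw [Complex.ofReal_tsum]
    congr 1; funext n
    rw [show (2:ℂ) = ((2:ℕ):ℂ) by norm_num, Complex.cpow_natCast]
    push_cast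
    ring
  have hzeta3 : riemannZeta 3 = ((∑' n : ℕ, 1/((n:ℝ)+1)^3 : ℝ) : ℂ) := by
    rw [zeta_eq_tsum_one_div_nat_add_one_cpow (by norm_num)]
    rw [Complex.ofReal_tsum]
    congr 1; funext n
    rw [show (3:ℂ) = ((3:ℕ):ℂ) by norm_num, Complex.cpow_natCast]
    push_cast
    ring
  have heq : ((∑' n : ℕ, ((n : ℝ) + 2) / ((n : ℝ) + 1) ^ 3 : ℝ) : ℂ)
      = riemannZeta 2 + riemannZeta 3 := by
    rw [hzeta2, hzeta3, ← Complex.ofReal_add]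
    congr 1
    rw [← Summable.tsum_add hs2 hs3]
    exact tsum_congr hsplit
  refine ⟨heq, ?_⟩
  rw [← heq]
  have htend : Filter.Tendsto (fun N => p N / q N) Filter.atTop
      (nhds (∑' n : ℕ, ((n : ℝ) + 2) / ((n : ℝ) + 1) ^ 3)) := by
    have h1 := hsum.hasSum.tendsto_sum_nat
    apply h1.congr
    intro N
    have hqN : q N = ((N.factorial : ℝ))^4 := (key N).1
    have hpN := (key N).2
    have hfac : ((N.factorial : ℝ))^4 ≠ 0 := by
      have := N.factorial_pos
      positivity
    rw [hpN, hqN, mul_div_assoc, div_self hfac, mul_one]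
  exact (Complex.continuous_ofReal.continuousAt.tendsto).comp htend
end
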